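/- Let X, Y, Z be n×n complex matrices and a ∈ ℂ such that [X,Y] = Z, [X,Z] = aY and [Y,Z] = 0. Then exp(X+Y) = e^{X/2} · exp( f₃(a) Y ) · e^{X/2}, where f₃(a) = Σ_{k≥0} a^k/(4^k (2k+1)!) (i.e. f₃(a) = (2/√a) sinh(√a/2)). -/

import Mathlib

/-!
Write `V` for the span of `Y` and `Z`; it is abelian and `ad X` acts on it with `(ad X)² = a`.
If `a = 0`, the commutator `Z` of `X` and `Y` is central and `exp (X + Y)` factors symmetrically
as in the Baker–Campbell–Hausdorff formula for the Heisenberg group, because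
`t ↦ exp (t X / 2) exp (t Y) exp (t X / 2)` solves `G' = (X + Y) G`. If `a = b² ≠ 0`, then
`Y ± Z / b` are eigenvectors of `ad X` with eigenvalues `± b`; conjugating `X` by `exp (Z / a)`
gives `X + Y`, and conjugation by `exp X` or `exp (X / 2)` acts diagonally on `V`, so both sides
become `exp v * exp X` with explicit `v ∈ V`. Comparing the two `v` reduces the theorem
to `f₃(b²) = 2 sinh (b / 2) / b`.
-/

open NormedSpace

theorem Commute.smul_add_smul {R A : Type*} [CommSemiring R] [Semiring A] [Algebra R A]
    {x y : A} (h : Commute x y) (p q p' q' : R) : Commute (p • x + q • y) (p' • x + q' • y) :=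
  ((((Commute.refl x).smul_left p).smul_right p').add_right
      ((h.smul_left p).smul_right q')).add_left
    (((h.symm.smul_left q).smul_right p').add_right
      (((Commute.refl y).smul_left q).smul_right q'))

theorem Complex.inv_two_mul_mul_exp_sub_one (b : ℂ) :
    (2 * b)⁻¹ * (exp b - 1) = 2 * sinh (b / 2) / b / 2 * exp (b / 2) := by
  have hexp : exp (b / 2) * exp (-(b / 2)) = 1 := by rw [← exp_add, add_neg_cancel, exp_zero]
  rw [two_sinh, show exp b = exp (b / 2) * exp (b / 2) by rw [← exp_add, add_halves]]
  linear_combination (2 * b)⁻¹ * hexp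

theorem hasSum_sq_pow_div_four_pow_mul_factorial {b : ℂ} (hb : b ≠ 0) :
    HasSum (fun k : ℕ => (b ^ 2) ^ k / (4 ^ k * ((2 * k + 1).factorial : ℂ)))
      (2 * Complex.sinh (b / 2) / b) := by
  rw [show 2 * Complex.sinh (b / 2) / b = Complex.sinh (b / 2) * (2 / b) by ring]
  refine ((Complex.hasSum_sinh (b / 2)).mul_right (2 / b)).congr_fun fun k => ?_
  rw [div_pow, pow_succ _ (2 * k), pow_succ _ (2 * k), pow_mul, pow_mul]
  field_simp
  ring

section Rat

variable {𝔸 : Type*} [NormedRing 𝔸] [NormedAlgebra ℚ 𝔸] [CompleteSpace 𝔸]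

theorem exp_mul_exp_neg (A : 𝔸) : exp A * exp (-A) = 1 := by
  rw [← exp_add_of_commute (Commute.refl A).neg_right, add_neg_cancel, exp_zero]

end Rat

section RCLike

variable {𝕂 𝔸 : Type*} [RCLike 𝕂] [NormedRing 𝔸] [NormedAlgebra 𝕂 𝔸] [NormedAlgebra ℚ 𝔸]
  [CompleteSpace 𝔸]

theorem eq_exp_smul_mul_of_hasDerivAt {A : 𝔸} {G : 𝕂 → 𝔸}
    (hG : ∀ t, HasDerivAt G (A * G t) t) (t : 𝕂) : G t = exp (t • A) * G 0 := by
  have hH : ∀ s : 𝕂, HasDerivAt (fun s => exp (s • -A) * G s) 0 s := fun s =>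
    ((hasDerivAt_exp_smul_const' (-A) s).fun_mul (hG s)).congr_deriv <| by
      rw [← mul_assoc, ← ((Commute.refl A).neg_right.smul_right s).exp_right.eq]
      noncomm_ring
  have hconst := is_const_of_deriv_eq_zero (fun s => (hH s).differentiableAt)
    (fun s => (hH s).deriv) t 0
  rw [zero_smul, exp_zero, one_mul, smul_neg] at hconst
  rw [← hconst, ← mul_assoc, exp_mul_exp_neg, one_mul]

theorem semiconjBy_exp_smul_of_commute_lie {Q A : 𝔸} (h : Commute Q ⁅Q, A⁆) (t : 𝕂) :
    SemiconjBy (exp (t • Q)) A (A + t • ⁅Q, A⁆) := by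
  set R := ⁅Q, A⁆ with hR
  let D : 𝕂 → 𝔸 := fun t => exp (t • Q) * A - (A + t • R) * exp (t • Q)
  have hD : ∀ t, HasDerivAt D (Q * D t) t := by
    intro t
    have hR' : HasDerivAt (fun t : 𝕂 => A + t • R) R t := by
      simpa using ((hasDerivAt_id t).smul_const R).const_add A
    refine (((hasDerivAt_exp_smul_const' Q t).mul_const A).sub
      (hR'.fun_mul (hasDerivAt_exp_smul_const' Q t))).congr_deriv ?_
    rw [Ring.lie_def] at hR
    simp only [D, mul_sub, mul_add, add_mul, mul_smul_comm, smul_mul_assoc, ← mul_assoc, h.eq]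
    rw [hR]
    noncomm_ring
  have hD0 : D t = 0 := by simpa [D] using eq_exp_smul_mul_of_hasDerivAt hD t
  exact sub_eq_zero.mp hD0

variable (𝕂) in
theorem exp_add_eq_exp_half_mul_exp_mul_exp_half_of_commute_lie {A B : 𝔸}
    (hA : Commute A ⁅A, B⁆) (hB : Commute B ⁅A, B⁆) :
    exp (A + B) = exp ((2⁻¹ : 𝕂) • A) * exp B * exp ((2⁻¹ : 𝕂) • A) := by
  set A₂ := (2⁻¹ : 𝕂) • A with hA₂
  set K := (2⁻¹ : 𝕂) • ⁅A, B⁆ with hK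
  have hA₂A₂ : A₂ + A₂ = A := by rw [← add_smul]; norm_num
  have hA₂B : ⁅A₂, B⁆ = K := by
    simp only [hA₂, hK, Ring.lie_def, smul_mul_assoc, mul_smul_comm, smul_sub]
  have hBA₂ : ⁅B, A₂⁆ = -K := by
    simp only [hA₂, hK, Ring.lie_def, smul_mul_assoc, mul_smul_comm, smul_sub, neg_sub]
  have hA₂K : Commute A₂ K := (hA.smul_left _).smul_right _
  let G : 𝕂 → 𝔸 := fun t => exp (t • A₂) * exp (t • B) * exp (t • A₂)
  have hG : ∀ t, HasDerivAt G ((A + B) * G t) t := by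
    intro t
    set e₁ := exp (t • A₂)
    set e₂ := exp (t • B)
    have he₁B : e₁ * B = (B + t • K) * e₁ := by
      rw [← hA₂B]
      exact semiconjBy_exp_smul_of_commute_lie (hA₂B ▸ hA₂K) t
    have he₂A₂ : e₂ * A₂ = (A₂ - t • K) * e₂ := by
      rw [sub_eq_add_neg, ← smul_neg, ← hBA₂]
      exact semiconjBy_exp_smul_of_commute_lie (hBA₂ ▸ (hB.smul_right _).neg_right) t
    have he₁ : Commute (A₂ - t • K) e₁ :=
      ((Commute.refl A₂).sub_left (hA₂K.symm.smul_left t)).smul_right t |>.exp_right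
    refine (((hasDerivAt_exp_smul_const' A₂ t).fun_mul (hasDerivAt_exp_smul_const' B t)).fun_mul
      (hasDerivAt_exp_smul_const' A₂ t)).congr_deriv ?_
    calc (A₂ * e₁ * e₂ + e₁ * (B * e₂)) * e₁ + e₁ * e₂ * (A₂ * e₁)
        = A₂ * G t + (e₁ * B) * e₂ * e₁ + e₁ * (e₂ * A₂) * e₁ := by simp only [G]; noncomm_ring
      _ = (A₂ + (B + t • K) + (A₂ - t • K)) * G t := by
        rw [he₁B, he₂A₂, ← mul_assoc e₁, ← he₁.eq]; simp only [G]; noncomm_ring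
      _ = (A + B) * G t := by rw [← hA₂A₂]; congr 1; abel
  simpa [G] using (eq_exp_smul_mul_of_hasDerivAt hG 1).symm

end RCLike

section Complex

variable {𝔸 : Type*} [NormedRing 𝔸] [NormedAlgebra ℂ 𝔸] [NormedAlgebra ℚ 𝔸] [CompleteSpace 𝔸]

theorem semiconjBy_exp_of_lie_eq_smul {A B : 𝔸} {μ : ℂ} (h : ⁅A, B⁆ = μ • B) :
    SemiconjBy (exp A) B (Complex.exp μ • B) := by
  have hB : SemiconjBy B (A + algebraMap ℂ 𝔸 μ) A := by
    rw [Ring.lie_def, sub_eq_iff_eq_add'] at h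
    rw [SemiconjBy, h, Algebra.algebraMap_eq_smul_one, mul_add, mul_smul_comm, mul_one]
  have hexp := hB.exp_right
  rw [exp_add_of_commute (Algebra.commutes μ A).symm, ← algebraMap_exp_comm,
    ← Complex.exp_eq_exp_ℂ, Algebra.algebraMap_eq_smul_one, mul_smul_comm, mul_one] at hexp
  rw [SemiconjBy, ← hexp, mul_smul_comm, smul_mul_assoc]

theorem semiconjBy_exp_smul_add_smul_of_lie_eq_smul {A P M : 𝔸} {μ ν : ℂ}
    (hP : ⁅A, P⁆ = μ • P) (hM : ⁅A, M⁆ = ν • M) (p q : ℂ) :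
    SemiconjBy (exp A) (p • P + q • M) ((p * Complex.exp μ) • P + (q * Complex.exp ν) • M) := by
  simpa only [mul_smul] using
    ((semiconjBy_exp_of_lie_eq_smul hP).smul_right p).add_right
      ((semiconjBy_exp_of_lie_eq_smul hM).smul_right q)

theorem exp_half_mul_exp_smul_add_smul_mul_exp_half {X P M : 𝔸} {μ ν : ℂ}
    (hP : ⁅X, P⁆ = μ • P) (hM : ⁅X, M⁆ = ν • M) (p q : ℂ) :
    exp ((2⁻¹ : ℂ) • X) * exp (p • P + q • M) * exp ((2⁻¹ : ℂ) • X) =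
      exp ((p * Complex.exp (μ / 2)) • P + (q * Complex.exp (ν / 2)) • M) * exp X := by
  have hhalf (κ : ℂ) {B : 𝔸} (h : ⁅X, B⁆ = κ • B) : ⁅(2⁻¹ : ℂ) • X, B⁆ = (κ / 2) • B := by
    rw [Ring.lie_def] at h ⊢
    rw [smul_mul_assoc, mul_smul_comm, ← smul_sub, h, smul_smul, inv_mul_eq_div]
  rw [(semiconjBy_exp_smul_add_smul_of_lie_eq_smul (hhalf μ hP) (hhalf ν hM) p q).exp_right.eq,
    mul_assoc, ← exp_add_of_commute (Commute.refl _), ← add_smul]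
  norm_num

theorem exp_add_eq_exp_mul_exp_of_lie_eq_smul {X P M : 𝔸} {b : ℂ} (hb : b ≠ 0)
    (hP : ⁅X, P⁆ = b • P) (hM : ⁅X, M⁆ = -b • M) (hPM : Commute P M) :
    exp (X + (2⁻¹ : ℂ) • (P + M)) =
      exp (((2 * b)⁻¹ * (Complex.exp b - 1)) • P +
        ((2 * -b)⁻¹ * (Complex.exp (-b) - 1)) • M) * exp X := by
  set c := (2 * b)⁻¹ with hc
  set V := (-c) • P + c • M
  have hVX : ⁅V, X⁆ = (2⁻¹ : ℂ) • (P + M) := by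
    rw [Ring.lie_def] at hP hM ⊢
    calc _ = c • (X * P - P * X) - c • (X * M - M * X) := by
          simp only [V, add_mul, mul_add, smul_mul_assoc, mul_smul_comm]; module
      _ = _ := by rw [hP, hM, hc]; match_scalars <;> field_simp
  have hV : Commute V ⁅V, X⁆ := by
    rw [hVX, smul_add]; exact hPM.smul_add_smul _ _ _ _
  have hconj : exp (X + (2⁻¹ : ℂ) • (P + M)) * exp V = exp V * exp X := by
    simpa only [one_smul, hVX] using
      ((semiconjBy_exp_smul_of_commute_lie (𝕂 := ℂ) hV 1).exp_right).eq.symm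
  calc exp (X + (2⁻¹ : ℂ) • (P + M))
      = exp (X + (2⁻¹ : ℂ) • (P + M)) * exp V * exp (c • P + (-c) • M) := by
        rw [mul_assoc, show c • P + (-c) • M = -V by module, exp_mul_exp_neg, mul_one]
    _ = exp V * exp ((c * Complex.exp b) • P + (-c * Complex.exp (-b)) • M) * exp X := by
        rw [hconj, mul_assoc,
          (semiconjBy_exp_smul_add_smul_of_lie_eq_smul hP hM c (-c)).exp_right.eq, mul_assoc]
    _ = _ := by
        rw [← exp_add_of_commute (hPM.smul_add_smul _ _ _ _)]
        congr 2
        match_scalars <;> simp only [hc] <;> ring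

theorem exp_add_eq_exp_half_mul_exp_mul_exp_half_of_lie_eq_smul {X P M : 𝔸} {b : ℂ}
    (hb : b ≠ 0) (hP : ⁅X, P⁆ = b • P) (hM : ⁅X, M⁆ = -b • M) (hPM : Commute P M) :
    exp (X + (2⁻¹ : ℂ) • (P + M)) =
      exp ((2⁻¹ : ℂ) • X) * exp ((2 * Complex.sinh (b / 2) / b) • (2⁻¹ : ℂ) • (P + M)) *
        exp ((2⁻¹ : ℂ) • X) := by
  have hf : 2 * Complex.sinh (-b / 2) / -b = 2 * Complex.sinh (b / 2) / b := by
    rw [neg_div, Complex.sinh_neg, mul_neg, neg_div_neg_eq]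
  set f := 2 * Complex.sinh (b / 2) / b
  rw [show f • (2⁻¹ : ℂ) • (P + M) = (f / 2) • P + (f / 2) • M by module,
    exp_half_mul_exp_smul_add_smul_mul_exp_half hP hM,
    exp_add_eq_exp_mul_exp_of_lie_eq_smul hb hP hM hPM, Complex.inv_two_mul_mul_exp_sub_one b,
    Complex.inv_two_mul_mul_exp_sub_one (-b), hf]

theorem exp_add_eq_exp_half_mul_exp_mul_exp_half_of_lie_eq_sq_smul {X Y Z : 𝔸} {b : ℂ}
    (hb : b ≠ 0) (hXY : ⁅X, Y⁆ = Z) (hXZ : ⁅X, Z⁆ = b ^ 2 • Y) (hYZ : Commute Y Z) :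
    exp (X + Y) =
      exp ((2⁻¹ : ℂ) • X) * exp ((2 * Complex.sinh (b / 2) / b) • Y) * exp ((2⁻¹ : ℂ) • X) := by
  have heigen (β : ℂ) (hβ : β ^ 2 = b ^ 2) (hβ₀ : β ≠ 0) :
      ⁅X, Y + β⁻¹ • Z⁆ = β • (Y + β⁻¹ • Z) := by
    rw [Ring.lie_def] at hXY hXZ ⊢
    calc _ = (X * Y - Y * X) + β⁻¹ • (X * Z - Z * X) := by
          simp only [mul_add, add_mul, mul_smul_comm, smul_mul_assoc]; module
      _ = _ := by rw [hXY, hXZ, ← hβ]; match_scalars <;> field_simp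
  have hY : (2⁻¹ : ℂ) • ((Y + b⁻¹ • Z) + (Y + (-b)⁻¹ • Z)) = Y := by rw [inv_neg]; module
  have hPM : Commute (Y + b⁻¹ • Z) (Y + (-b)⁻¹ • Z) := by
    simpa only [one_smul] using hYZ.smul_add_smul 1 b⁻¹ 1 (-b)⁻¹
  simpa only [hY] using exp_add_eq_exp_half_mul_exp_mul_exp_half_of_lie_eq_smul hb
    (heigen b rfl hb) (heigen (-b) (neg_sq b) (neg_ne_zero.2 hb)) hPM

end Complex

theorem exp_add_symmetric_of_cyclic_relations (m : ℕ) (X Y Z : Matrix (Fin m) (Fin m) ℂ)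
    (a : ℂ) (h1 : ⁅X, Y⁆ = Z) (h2 : ⁅X, Z⁆ = a • Y) (h3 : ⁅Y, Z⁆ = 0)
    (f₃ : ℂ) (hf₃ : f₃ = ∑' k : ℕ, a ^ k / (4 ^ k * ((2 * k + 1).factorial : ℂ))) :
    NormedSpace.exp (X + Y) =
      NormedSpace.exp ((1 / 2 : ℂ) • X) * NormedSpace.exp (f₃ • Y) *
        NormedSpace.exp ((1 / 2 : ℂ) • X) := by
  open scoped Matrix.Norms.Operator in
  have hYZ : Commute Y Z := sub_eq_zero.mp (Ring.lie_def Y Z ▸ h3)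
  rw [one_div]
  rcases eq_or_ne a 0 with rfl | ha
  · have hXZ : Commute X Z := sub_eq_zero.mp (Ring.lie_def X Z ▸ h2.trans (zero_smul ℂ Y))
    have hf₃one : f₃ = 1 := by
      rw [hf₃, tsum_eq_single 0 fun k hk => by simp [hk]]
      simp
    rw [hf₃one, one_smul]
    exact exp_add_eq_exp_half_mul_exp_mul_exp_half_of_commute_lie ℂ (h1 ▸ hXZ) (h1 ▸ hYZ)
  · obtain ⟨b, rfl⟩ := IsAlgClosed.exists_pow_nat_eq a two_pos
    have hb : b ≠ 0 := by rintro rfl; simp at ha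
    rw [hf₃, (hasSum_sq_pow_div_four_pow_mul_factorial hb).tsum_eq]
    exact exp_add_eq_exp_half_mul_exp_mul_exp_half_of_lie_eq_sq_smul hb h1 h2 hYZ
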